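/- arXiv:2505.05898 — 8 statements merged into one kernel-verified Lean document; each statement's English description precedes it below -/
import Mathlib

section
/- Let g be a 3-dimensional real Lie algebra with orthonormal basis E1, E2, E3 and brackets [E1,E2]=0, [E2,E3]=λ1 E1, [E3,E1]=λ2 E2 with λ1 ≥ λ2 > 0. Then the only 2-dimensional Lie subalgebra of g is span{E1,E2}. -/
open Matrix

/-- Bracket of a unimodular 3-dimensional Lie algebra with structure constants
`l1, l2, l3`: `[E1,E2] = l3 E3`, `[E2,E3] = l1 E1`, `[E3,E1] = l2 E2`,
extended bilinearly to `ℝ³`. Here `E1 = ![1,0,0]`, `E2 = ![0,1,0]`, `E3 = ![0,0,1]`. -/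
def brk (l1 l2 l3 : ℝ) (X Y : Fin 3 → ℝ) : Fin 3 → ℝ :=
  ![l1 * (X 1 * Y 2 - X 2 * Y 1),
    l2 * (X 2 * Y 0 - X 0 * Y 2),
    l3 * (X 0 * Y 1 - X 1 * Y 0)]

/-!
If a 2-dimensional subalgebra `h` differs from `span{E1, E2}`, it meets that plane in a line
`ℝ V` and contains some `W` with `W 2 ≠ 0`. Since `[E1, E2] = 0`, the bracket `[V, W]` lies in
both `h` and the plane, hence `[V, W] = t V`. But on the plane `ad W` acts as `W 2` times the
matrix `[[0, λ1], [-λ2, 0]]`, whose eigenvalues `±i √(λ1 λ2)` are not real; so `V = 0`.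
-/

open Module

theorem Submodule.finrank_inf_add_one_of_ne {K V : Type*} [DivisionRing K] [AddCommGroup V]
    [Module K V] [FiniteDimensional K V] {p q : Submodule K V}
    (hp : finrank K p + 1 = finrank K V) (hq : finrank K q = finrank K p) (hpq : p ≠ q) :
    finrank K ↥(p ⊓ q) + 1 = finrank K p := by
  have hlt : p < p ⊔ q := by
    refine lt_of_le_of_ne le_sup_left fun hsup ↦ hpq ?_
    exact (eq_of_le_of_finrank_eq (sup_eq_left.mp hsup.symm) hq).symm
  have hsup_lt := Submodule.finrank_lt_finrank_of_lt hlt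
  have hsup_le := Submodule.finrank_le (p ⊔ q)
  have hsum := Submodule.finrank_sup_add_finrank_inf_eq p q
  omega

theorem span_E1_E2_eq_ker_proj_two :
    Submodule.span ℝ {![1, 0, 0], ![0, 1, 0]} =
      LinearMap.ker (LinearMap.proj 2 : (Fin 3 → ℝ) →ₗ[ℝ] ℝ) := by
  ext X
  simp only [LinearMap.mem_ker, LinearMap.proj_apply, Submodule.mem_span_pair]
  constructor
  · rintro ⟨a, b, rfl⟩
    simp
  · intro hX
    refine ⟨X 0, X 1, funext fun i ↦ ?_⟩
    fin_cases i <;> simp [hX]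

theorem finrank_ker_proj_two :
    finrank ℝ (LinearMap.ker (LinearMap.proj 2 : (Fin 3 → ℝ) →ₗ[ℝ] ℝ)) = 2 := by
  have hne : (LinearMap.proj 2 : (Fin 3 → ℝ) →ₗ[ℝ] ℝ) ≠ 0 := fun h0 ↦ by
    simpa using LinearMap.congr_fun h0 (Pi.single 2 1)
  simpa using Dual.finrank_ker_add_one_of_ne_zero hne

theorem brk_zero_apply_two (l1 l2 : ℝ) (X Y : Fin 3 → ℝ) : brk l1 l2 0 X Y 2 = 0 := by
  simp [brk]

theorem eq_zero_of_brk_eq_smul {l1 l2 l3 t : ℝ} (hl1 : 0 < l1) (hl2 : 0 < l2)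
    {V W : Fin 3 → ℝ} (hV : V 2 = 0) (hW : W 2 ≠ 0) (hVW : brk l1 l2 l3 V W = t • V) :
    V = 0 := by
  have e0 : l1 * V 1 * W 2 = t * V 0 := by
    simpa [brk, hV, mul_assoc] using congrFun hVW 0
  have e1 : -(l2 * V 0 * W 2) = t * V 1 := by
    simpa [brk, hV, mul_assoc] using congrFun hVW 1
  have hquad : (l1 * V 1 ^ 2 + l2 * V 0 ^ 2) * W 2 = 0 := by
    linear_combination V 1 * e0 - V 0 * e1
  have hquad' : l1 * V 1 ^ 2 + l2 * V 0 ^ 2 = 0 := (mul_eq_zero.mp hquad).resolve_right hW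
  have hterm1 := mul_nonneg hl1.le (sq_nonneg (V 1))
  have hterm0 := mul_nonneg hl2.le (sq_nonneg (V 0))
  have hV1 : V 1 = 0 := by simpa [hl1.ne'] using (by linarith : l1 * V 1 ^ 2 = 0)
  have hV0 : V 0 = 0 := by simpa [hl2.ne'] using (by linarith : l2 * V 0 ^ 2 = 0)
  funext i
  fin_cases i <;> simp [hV0, hV1, hV]

/-- In the Lie algebra of the universal cover of E(2), with brackets
`[E1,E2]=0`, `[E2,E3]=λ1 E1`, `[E3,E1]=λ2 E2`, `λ1 ≥ λ2 > 0`, the only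
2-dimensional Lie subalgebra is `span{E1,E2}`. -/
theorem stmt0 (l1 l2 : ℝ) (hl : l1 ≥ l2) (h2 : 0 < l2)
    (h : Submodule ℝ (Fin 3 → ℝ))
    (hdim : Module.finrank ℝ h = 2)
    (hclosed : ∀ X ∈ h, ∀ Y ∈ h, brk l1 l2 0 X Y ∈ h) :
    h = Submodule.span ℝ {![1,0,0], ![0,1,0]} := by
  rw [span_E1_E2_eq_ker_proj_two]
  set P := LinearMap.ker (LinearMap.proj 2 : (Fin 3 → ℝ) →ₗ[ℝ] ℝ)
  have hdimP : finrank ℝ P = 2 := finrank_ker_proj_two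
  by_contra hne
  have hline : finrank ℝ ↥(h ⊓ P) = 1 := by
    have := Submodule.finrank_inf_add_one_of_ne (by simp [hdim])
      (hdimP.trans hdim.symm) hne
    omega
  obtain ⟨⟨V, hVh, hVP⟩, hV0, hmultiple⟩ := finrank_eq_one_iff'.mp hline
  obtain ⟨W, hWh, hWP⟩ : ∃ W ∈ h, W ∉ P := SetLike.not_le_iff_exists.mp fun hle ↦
    hne (Submodule.eq_of_le_of_finrank_eq hle (hdim.trans hdimP.symm))
  obtain ⟨t, ht⟩ := hmultiple ⟨brk l1 l2 0 V W, hclosed V hVh W hWh,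
    brk_zero_apply_two l1 l2 V W⟩
  exact hV0 (Subtype.ext (eq_zero_of_brk_eq_smul (h2.trans_le hl) h2 hVP hWP
    (congrArg Subtype.val ht).symm))
end

section
/- Let g be a 3-dimensional real Lie algebra with orthonormal basis E1, E2, E3, an inner product making this basis orthonormal, and brackets [E1,E2]=λ3 E3, [E2,E3]=λ1 E1, [E3,E1]=λ2 E2. A 2-dimensional subspace h = span{A,B} of g is a Lie subalgebra if and only if λ1(a2 b3 − a3 b2)² + λ2(a3 b1 − a1 b3)² + λ3(a1 b2 − a2 b1)² = 0, where A = a1 E1 + a2 E2 + a3 E3 and B = b1 E1 + b2 E2 + b3 E3. -/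
/-!
The bracket is `[X, Y] = diag(λ₁, λ₂, λ₃) (X × Y)`. Since the cross product is bilinear and
alternating, the brackets of elements of `span {A, B}` are exactly the multiples of `[A, B]`, so
the plane is a subalgebra iff `[A, B]` lies in it. For independent `A`, `B` that plane is the
orthogonal complement of `c = A × B` (if `⟨v, c⟩ = det (v, A, B)` vanishes, `v` depends on
`A`, `B`), and `⟨diag(λ) c, c⟩ = λ₁ c₁² + λ₂ c₂² + λ₃ c₃²`.
-/

open Matrix

theorem brk_eq_diagonal_mulVec_cross (l1 l2 l3 : ℝ) (X Y : Fin 3 → ℝ) :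
    brk l1 l2 l3 X Y = diagonal ![l1, l2, l3] *ᵥ (X ⨯₃ Y) := by
  ext i
  fin_cases i <;> simp [brk, cross_apply, mulVec_diagonal]

theorem cross_smul_add_smul {R : Type*} [CommRing R] (p q r s : R) (A B : Fin 3 → R) :
    (p • A + q • B) ⨯₃ (r • A + s • B) = (p * s - q * r) • (A ⨯₃ B) := by
  simp only [map_add, map_smul, LinearMap.add_apply, LinearMap.smul_apply, cross_self,
    ← cross_anticomm B A, smul_zero, smul_neg]
  module

theorem diagonal_mulVec_dotProduct_self {n R : Type*} [Fintype n] [DecidableEq n] [CommSemiring R]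
    (d v : n → R) : (diagonal d *ᵥ v) ⬝ᵥ v = ∑ i, d i * v i ^ 2 := by
  simp only [dotProduct, mulVec_diagonal, mul_assoc, sq]

theorem mem_span_pair_iff_dotProduct_cross_eq_zero {K : Type*} [Field K] {A B : Fin 3 → K}
    (hAB : LinearIndependent K ![A, B]) (v : Fin 3 → K) :
    v ∈ Submodule.span K {A, B} ↔ v ⬝ᵥ A ⨯₃ B = 0 := by
  constructor
  · intro hv
    obtain ⟨a, b, rfl⟩ := Submodule.mem_span_pair.mp hv
    simp [add_dotProduct, smul_dotProduct, dot_self_cross, dot_cross_self]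
  · contrapose
    intro hv
    have hvAB : LinearIndependent K ![v, A, B] := by
      refine linearIndependent_finCons.mpr ⟨hAB, ?_⟩
      rwa [Matrix.range_cons, Matrix.range_cons, Matrix.range_empty, Set.union_empty,
        Set.singleton_union]
    rw [triple_product_eq_det]
    exact (isUnit_iff_isUnit_det _).mp (linearIndependent_rows_iff_isUnit.mp hvAB) |>.ne_zero

theorem brk_smul_add_smul (l1 l2 l3 p q r s : ℝ) (A B : Fin 3 → ℝ) :
    brk l1 l2 l3 (p • A + q • B) (r • A + s • B) = (p * s - q * r) • brk l1 l2 l3 A B := by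
  rw [brk_eq_diagonal_mulVec_cross, brk_eq_diagonal_mulVec_cross, cross_smul_add_smul,
    mulVec_smul]

theorem forall_brk_mem_span_pair_iff (l1 l2 l3 : ℝ) (A B : Fin 3 → ℝ) :
    (∀ X ∈ Submodule.span ℝ ({A, B} : Set (Fin 3 → ℝ)),
      ∀ Y ∈ Submodule.span ℝ ({A, B} : Set (Fin 3 → ℝ)),
        brk l1 l2 l3 X Y ∈ Submodule.span ℝ ({A, B} : Set (Fin 3 → ℝ))) ↔
      brk l1 l2 l3 A B ∈ Submodule.span ℝ ({A, B} : Set (Fin 3 → ℝ)) := by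
  refine ⟨fun h ↦ h A (Submodule.subset_span (by simp)) B (Submodule.subset_span (by simp)),
    fun h X hX Y hY ↦ ?_⟩
  obtain ⟨p, q, rfl⟩ := Submodule.mem_span_pair.mp hX
  obtain ⟨r, s, rfl⟩ := Submodule.mem_span_pair.mp hY
  rw [brk_smul_add_smul]
  exact Submodule.smul_mem _ _ h

/-- For linearly independent `A = a1 E1 + a2 E2 + a3 E3` and `B = b1 E1 + b2 E2 + b3 E3`,
the plane `span{A,B}` is a Lie subalgebra iff
`λ1(a2 b3 − a3 b2)² + λ2(a3 b1 − a1 b3)² + λ3(a1 b2 − a2 b1)² = 0`. -/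
theorem stmt1 (l1 l2 l3 a1 a2 a3 b1 b2 b3 : ℝ)
    (A B : Fin 3 → ℝ) (hA : A = ![a1, a2, a3]) (hB : B = ![b1, b2, b3])
    (hind : LinearIndependent ℝ ![A, B]) :
    (∀ X ∈ Submodule.span ℝ ({A, B} : Set (Fin 3 → ℝ)),
      ∀ Y ∈ Submodule.span ℝ ({A, B} : Set (Fin 3 → ℝ)),
        brk l1 l2 l3 X Y ∈ Submodule.span ℝ ({A, B} : Set (Fin 3 → ℝ))) ↔
      l1 * (a2 * b3 - a3 * b2) ^ 2 + l2 * (a3 * b1 - a1 * b3) ^ 2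
        + l3 * (a1 * b2 - a2 * b1) ^ 2 = 0 := by
  rw [forall_brk_mem_span_pair_iff, mem_span_pair_iff_dotProduct_cross_eq_zero hind,
    brk_eq_diagonal_mulVec_cross, diagonal_mulVec_dotProduct_self, Fin.sum_univ_three]
  subst hA hB
  simp [cross_apply]
end

section
/- Let g be the Lie algebra sol₃ with orthonormal basis E1, E2, E3 and brackets [E2,E3]=λ1 E1, [E1,E2]=λ3 E3, [E3,E1]=0, with λ1 > 0 > λ3. Then every 2-dimensional Lie subalgebra of g equals span{E1,E3}, or is conjugate (via the adjoint action of an element of the exponential of span{E1,E3}) to span{√λ1 E1 + ε √(−λ3) E3, E2} for some ε ∈ {+1,−1}. -/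
/-!
Let `𝔫 = span{E1, E3}`, an abelian ideal. A 2-dimensional subalgebra `h ≠ 𝔫` contains some `X`
with `X₂ = 1` and meets `𝔫` in a line `ℝ W`. Since `[X, W] ∈ h ∩ 𝔫`, `W` is an eigenvector of
`ad X` on `𝔫`, whose matrix `[[0, λ1], [-λ3, 0]]` does not depend on `X`; its eigenvectors are the
multiples of `√λ1 E1 ± √(-λ3) E3`. As `𝔫` is abelian, `id + ad C` fixes these for `C ∈ 𝔫`, and
`C` can be chosen so that it maps `E2` to `X`.
-/

open Matrix

open Module Submodule

section CoordinateSubspaces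

variable {K ι : Type*} [Field K]

lemma linearIndependent_pair_of_apply_eq_zero {u v : ι → K} {i : ι} (hu : u ≠ 0)
    (hui : u i = 0) (hvi : v i ≠ 0) : LinearIndependent K ![u, v] := by
  rw [LinearIndependent.pair_iff]
  intro s t hst
  have ht : t = 0 := by simpa [hui, hvi] using congrFun hst i
  subst ht
  simp only [zero_smul, add_zero, smul_eq_zero] at hst
  exact ⟨hst.resolve_right hu, rfl⟩

lemma eq_span_pair_of_finrank_eq_two {V : Type*} [AddCommGroup V] [Module K V]
    {h : Submodule K V} [FiniteDimensional K h] (hdim : finrank K h = 2) {u v : V}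
    (hu : u ∈ h) (hv : v ∈ h) (huv : LinearIndependent K ![u, v]) :
    h = span K {u, v} := by
  refine (eq_of_le_of_finrank_le (span_le.2 ?_) ?_).symm
  · rintro w (rfl | rfl) <;> assumption
  · have := finrank_span_eq_card huv
    rw [hdim, ← Matrix.range_cons_cons_empty, this, Fintype.card_fin]

lemma exists_smul_eq_of_mem_span_pair {u v z : ι → K} {i : ι} (hz : z ∈ span K {u, v})
    (hzi : z i = 0) (hui : u i = 0) (hvi : v i ≠ 0) : ∃ t : K, z = t • u := by
  obtain ⟨s, t, rfl⟩ := mem_span_pair.1 hz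
  have ht : t = 0 := by simpa [hui, hvi] using hzi
  exact ⟨s, by simp [ht]⟩

lemma exists_mem_apply_eq_zero_ne_zero [Finite ι] (h : Submodule K (ι → K))
    (hdim : 1 < finrank K h) (i : ι) : ∃ w ∈ h, w i = 0 ∧ w ≠ 0 := by
  have hker := LinearMap.ker_ne_bot_of_finrank_lt
    (f := (LinearMap.proj i : (ι → K) →ₗ[K] K) ∘ₗ h.subtype) (by simpa using hdim)
  obtain ⟨w, hw, hw0⟩ := (Submodule.ne_bot_iff _).1 hker
  exact ⟨w, w.2, hw, by simpa using hw0⟩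

end CoordinateSubspaces

section Sol3

variable {l1 l3 : ℝ}

lemma mem_span_e1_e3_iff {v : Fin 3 → ℝ} :
    v ∈ span ℝ ({![1,0,0], ![0,0,1]} : Set (Fin 3 → ℝ)) ↔ v 1 = 0 := by
  rw [mem_span_pair]
  constructor
  · rintro ⟨a, b, rfl⟩
    simp
  · intro hv
    exact ⟨v 0, v 2, by ext i; fin_cases i <;> simp [hv]⟩

lemma brk_apply_one (X Y : Fin 3 → ℝ) : brk l1 0 l3 X Y 1 = 0 := by
  simp [brk]

lemma brk_eq_zero_of_apply_one_eq_zero {X Y : Fin 3 → ℝ} (hX : X 1 = 0) (hY : Y 1 = 0) :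
    brk l1 0 l3 X Y = 0 := by
  ext i; fin_cases i <;> simp [brk, hX, hY]

lemma exists_sign_smul_eq_of_brk_eq_smul (h1 : 0 < l1) (h3 : l3 < 0) {X W : Fin 3 → ℝ}
    {t : ℝ} (hX1 : X 1 = 1) (hW1 : W 1 = 0) (hW0 : W ≠ 0) (hXW : brk l1 0 l3 X W = t • W) :
    ∃ ε : ℝ, (ε = 1 ∨ ε = -1) ∧ ∃ c : ℝ, ![√l1, 0, ε * √(-l3)] = c • W := by
  have e0 : l1 * W 2 = t * W 0 := by simpa [brk, hX1, hW1] using congrFun hXW 0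
  have e2 : -l3 * W 0 = t * W 2 := by simpa [brk, hX1, hW1] using congrFun hXW 2
  have hsq : l1 * W 2 ^ 2 = -l3 * W 0 ^ 2 := by linear_combination W 2 * e0 - W 0 * e2
  have hW00 : W 0 ≠ 0 := by
    intro h0
    have : W 2 = 0 := by simpa [h0, h1.ne'] using hsq
    exact hW0 (by ext i; fin_cases i <;> simp [h0, hW1, this])
  have hfac : (√l1 * W 2 - √(-l3) * W 0) * (√l1 * W 2 + √(-l3) * W 0) = 0 := by
    linear_combination W 2 ^ 2 * Real.sq_sqrt h1.le - W 0 ^ 2 * Real.sq_sqrt (neg_nonneg.2 h3.le)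
      + hsq
  obtain ⟨ε, hε, hεW⟩ : ∃ ε : ℝ, (ε = 1 ∨ ε = -1) ∧ √l1 * W 2 = ε * √(-l3) * W 0 := by
    rcases mul_eq_zero.1 hfac with hc | hc
    · exact ⟨1, Or.inl rfl, by linarith⟩
    · exact ⟨-1, Or.inr rfl, by linarith⟩
  refine ⟨ε, hε, √l1 / W 0, ?_⟩
  ext i; fin_cases i
  · simp [hW00]
  · simp [hW1]
  · simp only [Fin.reduceFinMk, Matrix.cons_val, Pi.smul_apply, smul_eq_mul]
    field_simp
    linear_combination -hεW

lemma add_brk_e2_eq (h1 : l1 ≠ 0) (h3 : l3 ≠ 0) {X : Fin 3 → ℝ} (hX1 : X 1 = 1) :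
    ![0,1,0] + brk l1 0 l3 ![X 2 / l3, 0, -X 0 / l1] ![0,1,0] = X := by
  ext i; fin_cases i <;> simp [brk, hX1] <;> field_simp

end Sol3

/-- Every 2-dimensional Lie subalgebra of sol₃ is either `span{E1,E3}` or the
image, under the inner automorphism `e^{ad_C} = id + ad_C` for some
`C ∈ span{E1,E3}`, of `span{√λ1 E1 + ε √(−λ3) E3, E2}` for some sign `ε`. -/
theorem stmt4 (l1 l3 : ℝ) (h1 : 0 < l1) (h3 : l3 < 0)
    (h : Submodule ℝ (Fin 3 → ℝ)) (hdim : Module.finrank ℝ h = 2)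
    (hclosed : ∀ X ∈ h, ∀ Y ∈ h, brk l1 0 l3 X Y ∈ h) :
    h = Submodule.span ℝ ({![1,0,0], ![0,0,1]} : Set (Fin 3 → ℝ)) ∨
      ∃ ε : ℝ, (ε = 1 ∨ ε = -1) ∧
        ∃ C ∈ Submodule.span ℝ ({![1,0,0], ![0,0,1]} : Set (Fin 3 → ℝ)),
          h = Submodule.span ℝ
            ((fun X => X + brk l1 0 l3 C X) ''
              ({![Real.sqrt l1, 0, ε * Real.sqrt (-l3)], ![0,1,0]} : Set (Fin 3 → ℝ))) := by
  by_cases hle : h ≤ span ℝ {![1,0,0], ![0,0,1]}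
  · refine .inl (eq_of_le_of_finrank_le hle ?_)
    exact (finrank_span_le_card _).trans (by simp [hdim])
  right
  obtain ⟨X, hXh, hX1⟩ : ∃ X ∈ h, X 1 = 1 := by
    obtain ⟨Y, hY, hY1⟩ := SetLike.not_le_iff_exists.1 hle
    rw [mem_span_e1_e3_iff] at hY1
    exact ⟨(Y 1)⁻¹ • Y, h.smul_mem _ hY, by simp [hY1]⟩
  obtain ⟨W, hWh, hW1, hW0⟩ := exists_mem_apply_eq_zero_ne_zero h (by omega) 1
  have hX10 : X 1 ≠ 0 := by simp [hX1]
  have hhW := eq_span_pair_of_finrank_eq_two hdim hWh hXh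
    (linearIndependent_pair_of_apply_eq_zero hW0 hW1 hX10)
  obtain ⟨t, ht⟩ := exists_smul_eq_of_mem_span_pair (hhW ▸ hclosed X hXh W hWh)
    (brk_apply_one X W) hW1 hX10
  obtain ⟨ε, hε, c, hV⟩ := exists_sign_smul_eq_of_brk_eq_smul h1 h3 hX1 hW1 hW0 ht
  refine ⟨ε, hε, ![X 2 / l3, 0, -X 0 / l1], mem_span_e1_e3_iff.2 rfl, ?_⟩
  rw [Set.image_pair, brk_eq_zero_of_apply_one_eq_zero rfl rfl, add_zero,
    add_brk_e2_eq h1.ne' h3.ne hX1]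
  refine eq_span_pair_of_finrank_eq_two hdim (hV ▸ h.smul_mem c hWh) hXh
    (linearIndependent_pair_of_apply_eq_zero ?_ rfl hX10)
  exact fun h0 => (Real.sqrt_pos.2 h1).ne' (congrFun h0 0)
end

section
/- The linear map φ on sol₃ defined by φ(E1)=E1, φ(E2)=−E2, φ(E3)=−E3 is a Lie algebra automorphism preserving the inner product, and it maps span{√λ1 E1 + √(−λ3) E3, E2} onto span{√λ1 E1 − √(−λ3) E3, E2}. -/
open Matrix

/-- The map `φ(E1)=E1, φ(E2)=−E2, φ(E3)=−E3`. -/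
def phi (X : Fin 3 → ℝ) : Fin 3 → ℝ := ![X 0, -X 1, -X 2]

/-!
`φ = diag(1, -1, -1)` is an orthogonal involution. It is a Lie automorphism for any structure
constants: the component `[X, Y]ᵢ` is bilinear in the two coordinates other than `i`, and the
product of the signs of `φ` on those two coordinates is its sign on the `i`-th one.
The plane statement holds since `φ` sends the first generator to the second one and `E2` to `-E2`.
-/

theorem isLinearMap_phi : IsLinearMap ℝ phi where
  map_add X Y := by ext i; fin_cases i <;> simp [phi] <;> ring
  map_smul c X := by ext i; fin_cases i <;> simp [phi]

theorem phi_involutive : Function.Involutive phi := by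
  intro X; ext i; fin_cases i <;> simp [phi]

theorem phi_brk (l1 l2 l3 : ℝ) (X Y : Fin 3 → ℝ) :
    phi (brk l1 l2 l3 X Y) = brk l1 l2 l3 (phi X) (phi Y) := by
  ext i; fin_cases i <;> simp [phi, brk] <;> ring

theorem phi_dotProduct_phi (X Y : Fin 3 → ℝ) : phi X ⬝ᵥ phi Y = X ⬝ᵥ Y := by
  simp [phi, dotProduct, Fin.sum_univ_three]

theorem image_phi_span (a b : ℝ) :
    phi '' (Submodule.span ℝ ({![a, 0, b], ![0, 1, 0]} : Set (Fin 3 → ℝ)) : Set (Fin 3 → ℝ)) =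
      Submodule.span ℝ ({![a, 0, -b], ![0, 1, 0]} : Set (Fin 3 → ℝ)) := by
  let f := isLinearMap_phi.mk' phi
  have hv : f ![a, 0, b] = ![a, 0, -b] := by ext i; fin_cases i <;> simp [f, phi]
  have hw : f ![0, 1, 0] = -![0, 1, 0] := by ext i; fin_cases i <;> simp [f, phi]
  change ((Submodule.span ℝ _).map f : Set (Fin 3 → ℝ)) = _
  rw [Submodule.map_span, Set.image_pair, hv, hw, Submodule.span_insert, Submodule.span_insert,
    ← Set.neg_singleton, Submodule.span_neg]

theorem stmt5_general (l1 l3 : ℝ) :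
    IsLinearMap ℝ phi ∧
    Function.Bijective phi ∧
    (∀ X Y : Fin 3 → ℝ, phi (brk l1 0 l3 X Y) = brk l1 0 l3 (phi X) (phi Y)) ∧
    (∀ X Y : Fin 3 → ℝ, phi X ⬝ᵥ phi Y = X ⬝ᵥ Y) ∧
    phi '' (Submodule.span ℝ
        ({![Real.sqrt l1, 0, Real.sqrt (-l3)], ![0,1,0]} : Set (Fin 3 → ℝ)) : Set (Fin 3 → ℝ)) =
      (Submodule.span ℝ
        ({![Real.sqrt l1, 0, -Real.sqrt (-l3)], ![0,1,0]} : Set (Fin 3 → ℝ)) : Set (Fin 3 → ℝ)) :=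
  ⟨isLinearMap_phi, phi_involutive.bijective, phi_brk l1 0 l3, phi_dotProduct_phi,
    image_phi_span _ _⟩

/-- `φ` is a linear Lie algebra automorphism of sol₃ preserving the inner product,
mapping `span{√λ1 E1 + √(−λ3) E3, E2}` onto `span{√λ1 E1 − √(−λ3) E3, E2}`. -/
theorem stmt5 (l1 l3 : ℝ) (h1 : 0 < l1) (h3 : l3 < 0) :
    IsLinearMap ℝ phi ∧
    Function.Bijective phi ∧
    (∀ X Y : Fin 3 → ℝ, phi (brk l1 0 l3 X Y) = brk l1 0 l3 (phi X) (phi Y)) ∧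
    (∀ X Y : Fin 3 → ℝ, phi X ⬝ᵥ phi Y = X ⬝ᵥ Y) ∧
    phi '' (Submodule.span ℝ
        ({![Real.sqrt l1, 0, Real.sqrt (-l3)], ![0,1,0]} : Set (Fin 3 → ℝ)) : Set (Fin 3 → ℝ)) =
      (Submodule.span ℝ
        ({![Real.sqrt l1, 0, -Real.sqrt (-l3)], ![0,1,0]} : Set (Fin 3 → ℝ)) : Set (Fin 3 → ℝ)) :=
  stmt5_general l1 l3
end

section
/- Let x,y,z: ℝ → ℝ satisfy the unimodular geodesic system x' = −yz(λ3−λ2), y' = −xz(λ1−λ3), z' = −xy(λ2−λ1), with λ1 > λ2 > 0 > λ3, and initial conditions x(0)=√(−λ3/(λ1−λ3)), y(0)=0, z(0)=−√(λ1/(λ1−λ3)). Then for all t, x(t)² = ((λ3−λ2)y(t)² − λ3)/(λ1−λ3) and z(t)² = ((λ2−λ1)y(t)² + λ1)/(λ1−λ3). -/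
theorem sq_sub_sq_eq_of_hasDerivAt {f g w : ℝ → ℝ} {a b : ℝ}
    (hf : ∀ t, HasDerivAt f (a * (g t * w t)) t) (hg : ∀ t, HasDerivAt g (b * (f t * w t)) t)
    (t : ℝ) : b * f t ^ 2 - a * g t ^ 2 = b * f 0 ^ 2 - a * g 0 ^ 2 := by
  have hderiv : ∀ s, HasDerivAt (fun s => b * f s ^ 2 - a * g s ^ 2) 0 s := fun s =>
    (((hf s).fun_pow 2).const_mul b).fun_sub (((hg s).fun_pow 2).const_mul a) |>.congr_deriv
      (by ring)
  exact is_const_of_deriv_eq_zero (fun s => (hderiv s).differentiableAt)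
    (fun s => (hderiv s).deriv) t 0

/-- Conserved quantities of the unimodular geodesic system: for a solution of
`x' = −yz(λ3−λ2)`, `y' = −xz(λ1−λ3)`, `z' = −xy(λ2−λ1)` with the stated initial
conditions, `x² = ((λ3−λ2)y² − λ3)/(λ1−λ3)` and `z² = ((λ2−λ1)y² + λ1)/(λ1−λ3)`. -/
theorem stmt12 (l1 l2 l3 : ℝ) (h12 : l1 > l2) (h2 : l2 > 0) (h3 : 0 > l3)
    (x y z : ℝ → ℝ)
    (hx : ∀ t, HasDerivAt x (-(y t * z t * (l3 - l2))) t)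
    (hy : ∀ t, HasDerivAt y (-(x t * z t * (l1 - l3))) t)
    (hz : ∀ t, HasDerivAt z (-(x t * y t * (l2 - l1))) t)
    (hx0 : x 0 = Real.sqrt (-l3 / (l1 - l3)))
    (hy0 : y 0 = 0)
    (hz0 : z 0 = -Real.sqrt (l1 / (l1 - l3))) :
    ∀ t, x t ^ 2 = ((l3 - l2) * y t ^ 2 - l3) / (l1 - l3) ∧
         z t ^ 2 = ((l2 - l1) * y t ^ 2 + l1) / (l1 - l3) := by
  have hl : 0 < l1 - l3 := by linarith
  have hx0_sq : x 0 ^ 2 = -l3 / (l1 - l3) := by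
    rw [hx0, Real.sq_sqrt (div_nonneg (by linarith) hl.le)]
  have hz0_sq : z 0 ^ 2 = l1 / (l1 - l3) := by
    rw [hz0, neg_sq, Real.sq_sqrt (div_nonneg (by linarith) hl.le)]
  have hy' : ∀ t, HasDerivAt y (-(l1 - l3) * (x t * z t)) t :=
    fun t => (hy t).congr_deriv (by ring)
  have hy'' : ∀ t, HasDerivAt y (-(l1 - l3) * (z t * x t)) t :=
    fun t => (hy t).congr_deriv (by ring)
  have hx' : ∀ t, HasDerivAt x (-(l3 - l2) * (y t * z t)) t :=
    fun t => (hx t).congr_deriv (by ring)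
  have hz' : ∀ t, HasDerivAt z (-(l2 - l1) * (y t * x t)) t :=
    fun t => (hz t).congr_deriv (by ring)
  intro t
  have hxy := sq_sub_sq_eq_of_hasDerivAt hx' hy' t
  have hzy := sq_sub_sq_eq_of_hasDerivAt hz' hy'' t
  rw [hx0_sq, hy0] at hxy
  rw [hz0_sq, hy0] at hzy
  constructor
  · field_simp at hxy ⊢
    linarith
  · field_simp at hzy ⊢
    linarith
end

section
/- The functions x(t) = √(−λ3/(λ1−λ3))·sech(t√(−λ1λ3)), y(t) = tanh(t√(−λ1λ3)), z(t) = −√(λ1/(λ1−λ3))·sech(t√(−λ1λ3)) solve the system x' = −yz(λ3−λ2), y' = −xz(λ1−λ3), z' = −xy(λ2−λ1) with λ2 = 0 and λ1 > 0 > λ3, and satisfy x(t)² + y(t)² + z(t)² = 1 for all t. -/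
/-!
With `a = √(-λ1λ3)`, `p = √(-λ3/(λ1-λ3))` and `q = √(λ1/(λ1-λ3))`, the curve is
`(p sech(at), tanh(at), -q sech(at))`. Since `sech' = -tanh·sech` and `tanh' = sech²`, the
system reduces to the constant relations `p a = -λ3 q`, `q a = λ1 p` and `a = (λ1-λ3) p q`,
and the unit norm to `p² + q² = 1` together with `tanh² + sech² = 1`.
-/

open Real

namespace Real

theorem tanh_sq_add_one_div_cosh_sq (x : ℝ) : tanh x ^ 2 + (1 / cosh x) ^ 2 = 1 := by
  have hc : cosh x ≠ 0 := (cosh_pos x).ne'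
  rw [tanh_eq_sinh_div_cosh]
  field_simp
  linear_combination -cosh_sq_sub_sinh_sq x

theorem hasDerivAt_tanh (x : ℝ) : HasDerivAt tanh ((1 / cosh x) ^ 2) x := by
  have hc : cosh x ≠ 0 := (cosh_pos x).ne'
  rw [show tanh = fun y => sinh y / cosh y from funext tanh_eq_sinh_div_cosh]
  refine ((hasDerivAt_sinh x).div (hasDerivAt_cosh x) hc).congr_deriv ?_
  field_simp
  linear_combination cosh_sq_sub_sinh_sq x

theorem hasDerivAt_one_div_cosh (x : ℝ) :
    HasDerivAt (fun y => 1 / cosh y) (-(tanh x * (1 / cosh x))) x := by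
  have hc : cosh x ≠ 0 := (cosh_pos x).ne'
  simp only [one_div]
  refine ((hasDerivAt_cosh x).inv hc).congr_deriv ?_
  rw [tanh_eq_sinh_div_cosh]
  field_simp

end Real

section SolConstants

variable {l1 l3 : ℝ}

theorem sqrt_div_sub_sq_add_sq (h1 : 0 ≤ l1) (h3 : l3 ≤ 0) (h13 : l3 < l1) :
    √(-l3 / (l1 - l3)) ^ 2 + √(l1 / (l1 - l3)) ^ 2 = 1 := by
  have hd : 0 < l1 - l3 := by linarith
  rw [sq_sqrt (div_nonneg (by linarith) hd.le), sq_sqrt (div_nonneg h1 hd.le),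
    ← add_div, neg_add_eq_sub, div_self hd.ne']

theorem sqrt_neg_div_sub_mul_sqrt (h1 : 0 ≤ l1) (h3 : l3 ≤ 0) :
    √(-l3 / (l1 - l3)) * √(-(l1 * l3)) = -l3 * √(l1 / (l1 - l3)) := by
  calc √(-l3 / (l1 - l3)) * √(-(l1 * l3))
      = √(-l3 / (l1 - l3) * -(l1 * l3)) :=
        (sqrt_mul (div_nonneg (by linarith) (by linarith)) _).symm
    _ = √((-l3) ^ 2 * (l1 / (l1 - l3))) := by ring_nf
    _ = -l3 * √(l1 / (l1 - l3)) := by rw [sqrt_mul (sq_nonneg _), sqrt_sq (by linarith)]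

theorem sqrt_div_sub_mul_sqrt (h1 : 0 ≤ l1) (h3 : l3 ≤ 0) :
    √(l1 / (l1 - l3)) * √(-(l1 * l3)) = l1 * √(-l3 / (l1 - l3)) := by
  calc √(l1 / (l1 - l3)) * √(-(l1 * l3))
      = √(l1 / (l1 - l3) * -(l1 * l3)) := (sqrt_mul (div_nonneg h1 (by linarith)) _).symm
    _ = √(l1 ^ 2 * (-l3 / (l1 - l3))) := by ring_nf
    _ = l1 * √(-l3 / (l1 - l3)) := by rw [sqrt_mul (sq_nonneg _), sqrt_sq h1]

theorem sqrt_neg_mul_eq_sub_mul_sqrt_div_mul_sqrt_div (h1 : 0 ≤ l1) (h3 : l3 ≤ 0)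
    (h13 : l3 < l1) :
    √(-(l1 * l3)) = (l1 - l3) * √(-l3 / (l1 - l3)) * √(l1 / (l1 - l3)) := by
  linear_combination (-√(-(l1 * l3))) * sqrt_div_sub_sq_add_sq h1 h3 h13
    + √(-l3 / (l1 - l3)) * sqrt_neg_div_sub_mul_sqrt h1 h3
    + √(l1 / (l1 - l3)) * sqrt_div_sub_mul_sqrt h1 h3

end SolConstants

/-- The explicit functions solve the geodesic system of Sol₃ (`λ2 = 0`,
`λ1 > 0 > λ3`) and have unit norm. -/
theorem stmt13 (l1 l3 : ℝ) (h1 : 0 < l1) (h3 : l3 < 0) :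
    let x : ℝ → ℝ := fun t => Real.sqrt (-l3 / (l1 - l3)) * (1 / Real.cosh (t * Real.sqrt (-(l1 * l3))))
    let y : ℝ → ℝ := fun t => Real.tanh (t * Real.sqrt (-(l1 * l3)))
    let z : ℝ → ℝ := fun t => -(Real.sqrt (l1 / (l1 - l3)) * (1 / Real.cosh (t * Real.sqrt (-(l1 * l3)))))
    (∀ t, HasDerivAt x (-(y t * z t * (l3 - 0))) t) ∧
    (∀ t, HasDerivAt y (-(x t * z t * (l1 - l3))) t) ∧
    (∀ t, HasDerivAt z (-(x t * y t * (0 - l1))) t) ∧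
    (∀ t, x t ^ 2 + y t ^ 2 + z t ^ 2 = 1) := by
  intro x y z
  have h13 : l3 < l1 := by linarith
  set a := √(-(l1 * l3))
  have hsech (t : ℝ) := (hasDerivAt_one_div_cosh (t * a)).comp t (hasDerivAt_mul_const a)
  refine ⟨fun t => ?_, fun t => ?_, fun t => ?_, fun t => ?_⟩
  · refine ((hsech t).const_mul √(-l3 / (l1 - l3))).congr_deriv ?_
    linear_combination
      (-(tanh (t * a) * (1 / cosh (t * a)))) * sqrt_neg_div_sub_mul_sqrt h1.le h3.le
  · refine ((hasDerivAt_tanh (t * a)).comp t (hasDerivAt_mul_const a)).congr_deriv ?_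
    linear_combination
      (1 / cosh (t * a)) ^ 2 * sqrt_neg_mul_eq_sub_mul_sqrt_div_mul_sqrt_div h1.le h3.le h13
  · refine ((hsech t).const_mul √(l1 / (l1 - l3))).neg.congr_deriv ?_
    linear_combination (tanh (t * a) * (1 / cosh (t * a))) * sqrt_div_sub_mul_sqrt h1.le h3.le
  · linear_combination (1 / cosh (t * a)) ^ 2 * sqrt_div_sub_sq_add_sq h1.le h3.le h13
      + tanh_sq_add_one_div_cosh_sq (t * a)
end

section
/- Let α,β ≥ 0 with β ≠ 0, α ∉ {0,1}, let c = (α + ε√(1−(1−α²)(1+β²)))/((1−α)β) for ε ∈ {+1,−1} (assuming 1−(1−α²)(1+β²) ≥ 0), and let ω = (1−α)(1+βc). Then ω ≠ 0, and the functions x(t) = (c/√(1+c²))·sech(ωt), y(t) = (−1/√(1+c²))·sech(ωt), z(t) = −tanh(ωt) solve the system x' = (1+α)(x+βy)z, y' = (1−α)(y−βx)z, z' = −((1+α)x² + 2αβxy + (1−α)y²). -/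
/-!
Substituting `x = p sech(ωt)`, `y = q sech(ωt)`, `z = -tanh(ωt)` and using `sech' = -sech tanh`,
`tanh' = sech²`, the system becomes three algebraic equations in `p, q, ω`. For
`(p, q) = (c, -1) / √(1 + c²)` and `ω = (1 - α)(1 + βc)` the second is an identity and the other
two reduce to the quadratic `(1 - α)β c² - 2αc + (1 + α)β = 0`, of which the given `c` is a root.
Moreover `ω = 1 + ε√(1 - (1 - α²)(1 + β²))`, which vanishes only if that root is `1`, i.e. `α² = 1`.
-/

open Real

lemma Real.hasDerivAt_tanh_s15 (x : ℝ) : HasDerivAt tanh (1 / cosh x ^ 2) x := by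
  rw [show tanh = fun x => sinh x / cosh x from funext tanh_eq_sinh_div_cosh]
  refine ((hasDerivAt_sinh x).div (hasDerivAt_cosh x) (cosh_pos x).ne').congr_deriv ?_
  rw [← cosh_sq_sub_sinh_sq x]
  ring

lemma hasDerivAt_sech_mul (ω t : ℝ) :
    HasDerivAt (fun s => 1 / cosh (ω * s)) (-ω * (1 / cosh (ω * t)) * tanh (ω * t)) t := by
  simp only [one_div]
  refine (((hasDerivAt_cosh (ω * t)).comp t ((hasDerivAt_id t).const_mul ω)).inv
    (cosh_pos (ω * t)).ne').congr_deriv ?_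
  rw [tanh_eq_sinh_div_cosh]
  simp only [Function.comp_apply]
  field_simp

lemma hasDerivAt_tanh_mul (ω t : ℝ) :
    HasDerivAt (fun s => tanh (ω * s)) (ω * (1 / cosh (ω * t)) ^ 2) t := by
  refine ((hasDerivAt_tanh_s15 (ω * t)).comp t ((hasDerivAt_id t).const_mul ω)).congr_deriv ?_
  simp only [one_div, mul_one, inv_pow]
  ring

theorem sech_tanh_ansatz {a b p q ω : ℝ} (hx : ω * p = (1 + a) * (p + b * q))
    (hy : ω * q = (1 - a) * (q - b * p))
    (hz : ω = (1 + a) * p ^ 2 + 2 * a * b * (p * q) + (1 - a) * q ^ 2) :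
    let x : ℝ → ℝ := fun t => p * (1 / cosh (ω * t))
    let y : ℝ → ℝ := fun t => q * (1 / cosh (ω * t))
    let z : ℝ → ℝ := fun t => -tanh (ω * t)
    (∀ t, HasDerivAt x ((1 + a) * (x t + b * y t) * z t) t) ∧
    (∀ t, HasDerivAt y ((1 - a) * (y t - b * x t) * z t) t) ∧
    (∀ t, HasDerivAt z (-((1 + a) * x t ^ 2 + 2 * a * b * (x t * y t) + (1 - a) * y t ^ 2)) t) := by
  intro x y z
  refine ⟨fun t => ?_, fun t => ?_, fun t => ?_⟩
  · refine ((hasDerivAt_sech_mul ω t).const_mul p).congr_deriv ?_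
    linear_combination (-(1 / cosh (ω * t) * tanh (ω * t))) * hx
  · refine ((hasDerivAt_sech_mul ω t).const_mul q).congr_deriv ?_
    linear_combination (-(1 / cosh (ω * t) * tanh (ω * t))) * hy
  · refine (hasDerivAt_tanh_mul ω t).neg.congr_deriv ?_
    linear_combination (-(1 / cosh (ω * t)) ^ 2) * hz

lemma sech_coeffs_of_quadratic {a b c : ℝ}
    (hc : (1 - a) * b * c ^ 2 - 2 * a * c + (1 + a) * b = 0) :
    let ω := (1 - a) * (1 + b * c)
    let p := c / √(1 + c ^ 2)
    let q := -1 / √(1 + c ^ 2)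
    ω * p = (1 + a) * (p + b * q) ∧ ω * q = (1 - a) * (q - b * p) ∧
      ω = (1 + a) * p ^ 2 + 2 * a * b * (p * q) + (1 - a) * q ^ 2 := by
  intro ω p q
  have hQ : √(1 + c ^ 2) ^ 2 = 1 + c ^ 2 := sq_sqrt (by positivity)
  have hQ0 : √(1 + c ^ 2) ≠ 0 := (sqrt_pos.2 (by positivity)).ne'
  refine ⟨?_, by ring, ?_⟩
  · simp only [ω, p, q]
    field_simp
    linear_combination hc
  · simp only [ω, p, q]
    field_simp
    rw [hQ]
    linear_combination c * hc

lemma quadratic_of_eq_div {a b ε S c : ℝ} (ha : 1 - a ≠ 0) (hb : b ≠ 0) (hε : ε ^ 2 = 1)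
    (hS : S ^ 2 = 1 - (1 - a ^ 2) * (1 + b ^ 2)) (hc : c = (a + ε * S) / ((1 - a) * b)) :
    (1 - a) * b * c ^ 2 - 2 * a * c + (1 + a) * b = 0 := by
  subst hc
  field_simp
  linear_combination S ^ 2 * hε + hS

lemma one_add_mul_sqrt_ne_zero {a b ε : ℝ} (ha : 0 ≤ a) (ha1 : a ≠ 1) (hε : ε = 1 ∨ ε = -1) :
    1 + ε * √(1 - (1 - a ^ 2) * (1 + b ^ 2)) ≠ 0 := by
  rcases hε with rfl | rfl
  · positivity
  · intro h
    have h1 : (1 - a ^ 2) * (1 + b ^ 2) = 0 := by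
      have := sqrt_eq_one.1 (by linarith : √(1 - (1 - a ^ 2) * (1 + b ^ 2)) = 1)
      linarith
    have ha2 : (1 - a) * (1 + a) = 0 := by
      linear_combination (mul_eq_zero.1 h1).resolve_right (by positivity)
    rcases mul_eq_zero.1 ha2 with h | h
    · exact ha1 (by linarith)
    · linarith

theorem stmt15_general (a b ε : ℝ) (ha : 0 ≤ a) (hb : b ≠ 0)
    (ha1 : a ≠ 1) (hε : ε = 1 ∨ ε = -1)
    (hD : 0 ≤ 1 - (1 - a ^ 2) * (1 + b ^ 2)) :
    let c : ℝ := (a + ε * Real.sqrt (1 - (1 - a ^ 2) * (1 + b ^ 2))) / ((1 - a) * b)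
    let ω : ℝ := (1 - a) * (1 + b * c)
    let x : ℝ → ℝ := fun t => (c / Real.sqrt (1 + c ^ 2)) * (1 / Real.cosh (ω * t))
    let y : ℝ → ℝ := fun t => (-1 / Real.sqrt (1 + c ^ 2)) * (1 / Real.cosh (ω * t))
    let z : ℝ → ℝ := fun t => -Real.tanh (ω * t)
    ω ≠ 0 ∧
    (∀ t, HasDerivAt x ((1 + a) * (x t + b * y t) * z t) t) ∧
    (∀ t, HasDerivAt y ((1 - a) * (y t - b * x t) * z t) t) ∧
    (∀ t, HasDerivAt z (-((1 + a) * x t ^ 2 + 2 * a * b * (x t * y t) + (1 - a) * y t ^ 2)) t) := by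
  intro c ω x y z
  have ha1' : 1 - a ≠ 0 := sub_ne_zero.2 (Ne.symm ha1)
  have hquad : (1 - a) * b * c ^ 2 - 2 * a * c + (1 + a) * b = 0 :=
    quadratic_of_eq_div ha1' hb (by rcases hε with rfl | rfl <;> norm_num) (sq_sqrt hD) rfl
  have hω : ω = 1 + ε * √(1 - (1 - a ^ 2) * (1 + b ^ 2)) := by
    simp only [ω, c]
    field_simp
    ring
  obtain ⟨hx, hy, hz⟩ := sech_coeffs_of_quadratic hquad
  exact ⟨hω ▸ one_add_mul_sqrt_ne_zero ha ha1 hε, sech_tanh_ansatz hx hy hz⟩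

/-- For `β ≠ 0`, `α ∉ {0,1}`, `c = (α + ε√(1−(1−α²)(1+β²)))/((1−α)β)` and
`ω = (1−α)(1+βc)`: `ω ≠ 0`, and the stated functions solve the non-unimodular
geodesic system. -/
theorem stmt15 (a b ε : ℝ) (ha : 0 ≤ a) (hb0 : 0 ≤ b) (hb : b ≠ 0)
    (ha0 : a ≠ 0) (ha1 : a ≠ 1) (hε : ε = 1 ∨ ε = -1)
    (hD : 0 ≤ 1 - (1 - a ^ 2) * (1 + b ^ 2)) :
    let c : ℝ := (a + ε * Real.sqrt (1 - (1 - a ^ 2) * (1 + b ^ 2))) / ((1 - a) * b)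
    let ω : ℝ := (1 - a) * (1 + b * c)
    let x : ℝ → ℝ := fun t => (c / Real.sqrt (1 + c ^ 2)) * (1 / Real.cosh (ω * t))
    let y : ℝ → ℝ := fun t => (-1 / Real.sqrt (1 + c ^ 2)) * (1 / Real.cosh (ω * t))
    let z : ℝ → ℝ := fun t => -Real.tanh (ω * t)
    ω ≠ 0 ∧
    (∀ t, HasDerivAt x ((1 + a) * (x t + b * y t) * z t) t) ∧
    (∀ t, HasDerivAt y ((1 - a) * (y t - b * x t) * z t) t) ∧
    (∀ t, HasDerivAt z (-((1 + a) * x t ^ 2 + 2 * a * b * (x t * y t) + (1 - a) * y t ^ 2)) t) :=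
  stmt15_general a b ε ha hb ha1 hε hD
end

section
/- Let g = k ⊕ p be the canonical decomposition of the isometry Lie algebra of M = M'×ℝ where M' is a rank-one symmetric surface of nonzero curvature, with p = p' ⊕ r, p' 2-dimensional, r 1-dimensional central, [p',p'] ⊆ k, [k,p'] ⊆ p', and [X,Y] ≠ 0 for linearly independent X,Y ∈ p'. Then a 2-dimensional subspace v ⊆ p is a Lie triple system (i.e., [X,[Y,Z]] ∈ v for all X,Y,Z ∈ v) if and only if v = p' or v = span{X} ⊕ r for some X ∈ p'. -/
/-!
If `v` meets `r` nontrivially then `r ≤ v`, and `v = span{X} ⊕ r` for any nonzero `X ∈ v ∩ p'`,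
which exists for dimension reasons. Otherwise take such an `X` and write any `w ∈ v` as
`Y + u` with `Y ∈ p'` orthogonal to `X` (after subtracting a multiple of `X`) and `u ∈ r`.
Since `r` is central, `⁅X, ⁅X, Y + u⁆⁆ = ⁅X, ⁅X, Y⁆⁆` is a nonzero multiple of `Y` by the
curvature condition, so the triple system `v` contains `Y`, hence `u ∈ v ∩ r = 0`; thus `v = p'`.
Conversely `p'` is a triple system because `[[p', p'], p'] ⊆ [k, p'] ⊆ p'`, and
`span{X} ⊕ r` is abelian.
-/

open Submodule Module

namespace Submodule

variable {K V : Type*} [DivisionRing K] [AddCommGroup V] [Module K V]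

theorem exists_ne_zero_mem_inf_of_le_sup {s t r : Submodule K V} [FiniteDimensional K s]
    [FiniteDimensional K t] [FiniteDimensional K r] (hs : s ≤ t ⊔ r)
    (hlt : finrank K r < finrank K s) : ∃ x ∈ s ⊓ t, x ≠ 0 := by
  refine exists_mem_ne_zero_of_ne_bot fun hbot => ?_
  have hsum := finrank_sup_add_finrank_inf_eq s t
  have hmono := finrank_mono (sup_le hs (le_sup_left : t ≤ t ⊔ r))
  have hsub := finrank_add_le_finrank_add_finrank t r
  rw [hbot, finrank_bot] at hsum
  omega

theorem disjoint_of_not_le_of_finrank_eq_one {s r : Submodule K V} (hr : finrank K r = 1)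
    (h : ¬r ≤ s) : Disjoint s r := by
  have : FiniteDimensional K r := .of_finrank_pos (by omega)
  have hlt : s ⊓ r < r := inf_le_right.lt_of_ne fun heq => h (heq ▸ inf_le_left)
  have := finrank_lt_finrank_of_lt hlt
  exact disjoint_iff.mpr (finrank_eq_zero.mp (by omega))

theorem finrank_span_singleton_sup {r : Submodule K V} [FiniteDimensional K r] {x : V}
    (hx : x ∉ r) : finrank K ↥(K ∙ x ⊔ r) = finrank K r + 1 := by
  have hsum := finrank_sup_add_finrank_inf_eq (K ∙ x) r
  have hx0 : x ≠ 0 := fun h => hx (h ▸ r.zero_mem)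
  rw [((disjoint_span_singleton_of_notMem hx).symm).eq_bot, finrank_bot,
    finrank_span_singleton hx0] at hsum
  omega

end Submodule

section TripleSystem

variable {R L : Type*} [CommRing R] [LieRing L] [LieAlgebra R L]

def IsLieTripleSystem (v : Submodule R L) : Prop :=
  ∀ X ∈ v, ∀ Y ∈ v, ∀ Z ∈ v, ⁅X, ⁅Y, Z⁆⁆ ∈ v

namespace IsLieTripleSystem

theorem of_lie_mem {k v : Submodule R L} (hvv : ∀ X ∈ v, ∀ Y ∈ v, ⁅X, Y⁆ ∈ k)
    (hkv : ∀ X ∈ k, ∀ Y ∈ v, ⁅X, Y⁆ ∈ v) : IsLieTripleSystem v := by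
  intro X hX Y hY Z hZ
  rw [← lie_skew]
  exact v.neg_mem (hkv _ (hvv Y hY Z hZ) X hX)

theorem of_lie_eq_zero {v : Submodule R L} (h : ∀ X ∈ v, ∀ Y ∈ v, ⁅X, Y⁆ = 0) :
    IsLieTripleSystem v := by
  intro X _ Y hY Z hZ
  rw [h Y hY Z hZ, lie_zero]
  exact v.zero_mem

theorem mem_of_lie_lie_eq_smul {K : Type*} [Field K] [LieAlgebra K L] {v : Submodule K L}
    (hv : IsLieTripleSystem v) {X Y u : L} {c : K} (hX : X ∈ v) (hYu : Y + u ∈ v)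
    (hXu : ⁅X, u⁆ = 0) (hc : c ≠ 0) (hXY : ⁅X, ⁅X, Y⁆⁆ = c • Y) : Y ∈ v := by
  have h := hv X hX X hX _ hYu
  rwa [lie_add, hXu, add_zero, hXY, smul_mem_iff _ hc] at h

end IsLieTripleSystem

theorem lie_eq_zero_of_mem_span_singleton_sup {X : L} {r : Submodule R L}
    (hr : ∀ u ∈ r, ∀ Y ∈ R ∙ X ⊔ r, ⁅u, Y⁆ = 0) :
    ∀ Y ∈ R ∙ X ⊔ r, ∀ Z ∈ R ∙ X ⊔ r, ⁅Y, Z⁆ = 0 := by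
  have hXmem : X ∈ R ∙ X ⊔ r := mem_sup_left (mem_span_singleton_self X)
  have hXZ : ∀ Z ∈ R ∙ X ⊔ r, ⁅X, Z⁆ = 0 := by
    intro Z hZ
    obtain ⟨_, hbX, u, hu, rfl⟩ := mem_sup.mp hZ
    obtain ⟨b, rfl⟩ := mem_span_singleton.mp hbX
    rw [lie_add, lie_smul, lie_self, smul_zero, zero_add, ← lie_skew, hr u hu X hXmem, neg_zero]
  intro Y hY Z hZ
  obtain ⟨_, haX, u, hu, rfl⟩ := mem_sup.mp hY
  obtain ⟨a, rfl⟩ := mem_span_singleton.mp haX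
  rw [add_lie, smul_lie, hXZ Z hZ, hr u hu Z hZ, smul_zero, add_zero]

end TripleSystem

theorem exists_smul_self_eq_one {M : Type*} [AddCommGroup M] [Module ℝ M]
    (ip : M →ₗ[ℝ] M →ₗ[ℝ] ℝ) {X : M} (hX : 0 < ip X X) :
    ∃ t : ℝ, t ≠ 0 ∧ ip (t • X) (t • X) = 1 := by
  refine ⟨(√(ip X X))⁻¹, by positivity, ?_⟩
  simp only [map_smul, LinearMap.smul_apply, smul_eq_mul]
  field_simp
  exact (Real.sq_sqrt hX.le).symm

section Curvature

variable {L : Type*} [LieRing L] [LieAlgebra ℝ L] (ip : L →ₗ[ℝ] L →ₗ[ℝ] ℝ) {p' : Submodule ℝ L}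

theorem exists_lie_lie_eq_smul_of_orthogonal
    (hcurv : ∀ X ∈ p', ∀ Y ∈ p', ip X X = 1 → ip Y Y = 1 → ip X Y = 0 →
      ∃ c : ℝ, c ≠ 0 ∧ ⁅X, ⁅X, Y⁆⁆ = c • Y)
    {X Y : L} (hX : X ∈ p') (hY : Y ∈ p') (hXX : 0 < ip X X) (hYY : 0 < ip Y Y)
    (hXY : ip X Y = 0) : ∃ c : ℝ, c ≠ 0 ∧ ⁅X, ⁅X, Y⁆⁆ = c • Y := by
  obtain ⟨s, hs, hsX⟩ := exists_smul_self_eq_one ip hXX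
  obtain ⟨t, ht, htY⟩ := exists_smul_self_eq_one ip hYY
  obtain ⟨c, hc, h⟩ := hcurv _ (p'.smul_mem s hX) _ (p'.smul_mem t hY) hsX htY
    (by simp [hXY])
  simp only [lie_smul, smul_lie, smul_smul] at h
  refine ⟨c / (s * s), div_ne_zero hc (mul_ne_zero hs hs), ?_⟩
  apply smul_right_injective L (mul_ne_zero (mul_ne_zero ht hs) hs)
  change (t * s * s) • _ = (t * s * s) • _
  rw [h, smul_smul]
  congr 1
  field_simp

variable {r v : Submodule ℝ L}

theorem IsLieTripleSystem.le_of_disjoint (hv : IsLieTripleSystem v) (hvpr : v ≤ p' ⊔ r)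
    (hvr : Disjoint v r) (hpos : ∀ X ∈ p', X ≠ 0 → 0 < ip X X)
    (hcurv : ∀ X ∈ p', ∀ Y ∈ p', ip X X = 1 → ip Y Y = 1 → ip X Y = 0 →
      ∃ c : ℝ, c ≠ 0 ∧ ⁅X, ⁅X, Y⁆⁆ = c • Y)
    {X : L} (hX : X ∈ v ⊓ p') (hX0 : X ≠ 0) (hXr : ∀ u ∈ r, ⁅X, u⁆ = 0) : v ≤ p' := by
  intro w hw
  obtain ⟨Y₀, hY₀, u, hu, rfl⟩ := mem_sup.mp (hvpr hw)
  have hXX := hpos X hX.2 hX0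
  set Y := Y₀ - (ip X Y₀ / ip X X) • X with hYdef
  have hYp : Y ∈ p' := p'.sub_mem hY₀ (p'.smul_mem _ hX.2)
  have hYu : Y + u ∈ v := by
    rw [show Y + u = Y₀ + u - (ip X Y₀ / ip X X) • X by rw [hYdef]; abel]
    exact v.sub_mem hw (v.smul_mem _ hX.1)
  have hXY : ip X Y = 0 := by
    simp only [hYdef, map_sub, map_smul, smul_eq_mul]
    field_simp
    ring
  have hYv : Y ∈ v := by
    rcases eq_or_ne Y 0 with hY0 | hY0
    · exact hY0 ▸ v.zero_mem
    obtain ⟨c, hc, hXXY⟩ :=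
      exists_lie_lie_eq_smul_of_orthogonal ip hcurv hX.2 hYp hXX (hpos Y hYp hY0) hXY
    exact hv.mem_of_lie_lie_eq_smul hX.1 hYu (hXr u hu) hc hXXY
  have hu0 : u = 0 :=
    disjoint_def.mp hvr u (by simpa using v.sub_mem hYu hYv) hu
  rw [hu0, add_zero]
  exact hY₀

end Curvature

theorem stmt19_general (L : Type) [LieRing L] [LieAlgebra ℝ L]
    (k p' r : Submodule ℝ L)
    (ip : L →ₗ[ℝ] L →ₗ[ℝ] ℝ)
    (hpos : ∀ X ∈ p', X ≠ 0 → 0 < ip X X)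
    (hp'2 : Module.finrank ℝ p' = 2)
    (hr1 : Module.finrank ℝ r = 1)
    (hdisj : p' ⊓ r = ⊥)
    (hcentral : ∀ X ∈ r, ∀ Y ∈ p' ⊔ r, ⁅X, Y⁆ = 0)
    (hpp : ∀ X ∈ p', ∀ Y ∈ p', ⁅X, Y⁆ ∈ k)
    (hkp : ∀ X ∈ k, ∀ Y ∈ p', ⁅X, Y⁆ ∈ p')
    (hcurv : ∀ X ∈ p', ∀ Y ∈ p', ip X X = 1 → ip Y Y = 1 → ip X Y = 0 →
      (∃ c : ℝ, c ≠ 0 ∧ ⁅X, ⁅X, Y⁆⁆ = c • Y) ∧ (∃ c : ℝ, c ≠ 0 ∧ ⁅Y, ⁅X, Y⁆⁆ = c • X))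
    (v : Submodule ℝ L) (hv : v ≤ p' ⊔ r) (hv2 : Module.finrank ℝ v = 2) :
    (∀ X ∈ v, ∀ Y ∈ v, ∀ Z ∈ v, ⁅X, ⁅Y, Z⁆⁆ ∈ v) ↔
      (v = p' ∨ ∃ X ∈ p', v = Submodule.span ℝ {X} ⊔ r) := by
  have : FiniteDimensional ℝ p' := .of_finrank_pos (by omega)
  have : FiniteDimensional ℝ r := .of_finrank_pos (by omega)
  have : FiniteDimensional ℝ v := .of_finrank_pos (by omega)
  change IsLieTripleSystem v ↔ _
  constructor
  · intro hLTS
    obtain ⟨X, hX, hX0⟩ := exists_ne_zero_mem_inf_of_le_sup hv (by omega)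
    by_cases hrv : r ≤ v
    · have hXr : X ∉ r := fun h => hX0 (disjoint_def.mp (disjoint_iff.mpr hdisj) X hX.2 h)
      refine Or.inr ⟨X, hX.2, (eq_of_le_of_finrank_le ?_ ?_).symm⟩
      · exact sup_le ((span_singleton_le_iff_mem X v).mpr hX.1) hrv
      · rw [finrank_span_singleton_sup hXr]
        omega
    · refine Or.inl (eq_of_le_of_finrank_le ?_ (by omega))
      refine hLTS.le_of_disjoint ip hv (disjoint_of_not_le_of_finrank_eq_one hr1 hrv) hpos
        (fun X hX Y hY h1 h2 h3 => (hcurv X hX Y hY h1 h2 h3).1) hX hX0 fun u hu => ?_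
      rw [← lie_skew, hcentral u hu X (mem_sup_left hX.2), neg_zero]
  · rintro (rfl | ⟨X, hXp, rfl⟩)
    · exact .of_lie_mem hpp hkp
    · refine .of_lie_eq_zero (lie_eq_zero_of_mem_span_singleton_sup fun u hu Y hY => ?_)
      exact hcentral u hu Y (sup_le_sup_right ((span_singleton_le_iff_mem X p').mpr hXp) r hY)

/-- In the isometry Lie algebra `g = k ⊕ p' ⊕ r` of `M' × ℝ` (`M'` a rank-one
symmetric surface of nonzero curvature), a 2-dimensional subspace `v ⊆ p = p' ⊕ r`
is a Lie triple system iff `v = p'` or `v = span{X} ⊕ r` for some `X ∈ p'`. -/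
theorem stmt19 (L : Type) [LieRing L] [LieAlgebra ℝ L]
    (k p' r : Submodule ℝ L)
    (ip : L →ₗ[ℝ] L →ₗ[ℝ] ℝ)
    (hsymm : ∀ X Y : L, ip X Y = ip Y X)
    (hpos : ∀ X ∈ p', X ≠ 0 → 0 < ip X X)
    (hp'2 : Module.finrank ℝ p' = 2)
    (hr1 : Module.finrank ℝ r = 1)
    (hdisj : p' ⊓ r = ⊥)
    (hcentral : ∀ X ∈ r, ∀ Y ∈ p' ⊔ r, ⁅X, Y⁆ = 0)
    (hpp : ∀ X ∈ p', ∀ Y ∈ p', ⁅X, Y⁆ ∈ k)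
    (hkp : ∀ X ∈ k, ∀ Y ∈ p', ⁅X, Y⁆ ∈ p')
    (hne : ∀ X ∈ p', ∀ Y ∈ p', LinearIndependent ℝ ![X, Y] → ⁅X, Y⁆ ≠ 0)
    (hcurv : ∀ X ∈ p', ∀ Y ∈ p', ip X X = 1 → ip Y Y = 1 → ip X Y = 0 →
      (∃ c : ℝ, c ≠ 0 ∧ ⁅X, ⁅X, Y⁆⁆ = c • Y) ∧ (∃ c : ℝ, c ≠ 0 ∧ ⁅Y, ⁅X, Y⁆⁆ = c • X))
    (v : Submodule ℝ L) (hv : v ≤ p' ⊔ r) (hv2 : Module.finrank ℝ v = 2) :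
    (∀ X ∈ v, ∀ Y ∈ v, ∀ Z ∈ v, ⁅X, ⁅Y, Z⁆⁆ ∈ v) ↔
      (v = p' ∨ ∃ X ∈ p', v = Submodule.span ℝ {X} ⊔ r) :=
  stmt19_general L k p' r ip hpos hp'2 hr1 hdisj hcentral hpp hkp hcurv v hv hv2
end
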